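/- arXiv:1402.7331 — 3 statements merged into one kernel-verified Lean document; each statement's English description precedes it below -/
import Mathlib

section
/- For every p ∈ [2, ∞) and every x ∈ (0, π_p/2), one has (x / sinh_p(x))^p < sin_p(x) / x < x / sinh_p(x). -/
open Real Set Filter Topology

/-- Generalized inverse sine: `arcsinp p x = ∫₀ˣ (1 - tᵖ)^(-1/p) dt`. -/
noncomputable def arcsinp (p x : ℝ) : ℝ := ∫ t in (0:ℝ)..x, (1 - t ^ p) ^ (-(1/p))

/-- The generalized half-pi: `π_p/2 = arcsin_p 1`. -/
noncomputable def pipHalf (p : ℝ) : ℝ := arcsinp p 1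

/-- Generalized sine: the inverse of `arcsinp p` viewed as a map on `[0,1]`. -/
noncomputable def sinp (p : ℝ) : ℝ → ℝ := Function.invFunOn (arcsinp p) (Set.Icc 0 1)

/-- Generalized cosine. -/
noncomputable def cosp (p x : ℝ) : ℝ := (1 - (sinp p x) ^ p) ^ (1/p : ℝ)

/-- Generalized tangent. -/
noncomputable def tanp (p x : ℝ) : ℝ := sinp p x / cosp p x

/-- Generalized inverse hyperbolic sine: `arsinhp p x = ∫₀ˣ (1 + tᵖ)^(-1/p) dt`. -/
noncomputable def arsinhp (p x : ℝ) : ℝ := ∫ t in (0:ℝ)..x, (1 + t ^ p) ^ (-(1/p))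

/-- Generalized hyperbolic sine: the inverse of `arsinhp p` viewed as a map on `[0,∞)`. -/
noncomputable def sinhp (p : ℝ) : ℝ → ℝ := Function.invFunOn (arsinhp p) (Set.Ici 0)

/-- Generalized hyperbolic cosine. -/
noncomputable def coshp (p x : ℝ) : ℝ := (1 + (sinhp p x) ^ p) ^ (1/p : ℝ)

/-- Generalized hyperbolic tangent. -/
noncomputable def tanhp (p x : ℝ) : ℝ := sinhp p x / coshp p x

/-!
Write `s, c, S, C` for `sinp, cosp, sinhp, coshp` and `t = s / c`, `T = S / C`. Differentiating
the inverses of the defining integrals gives `s' = c`, `S' = C`, `c' = -c t ^ (p - 1)`,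
`C' = C T ^ (p - 1)` and `T' = C ^ (-p)`, while `c ^ p = 1 - s ^ p` and `C ^ p = 1 + S ^ p`.
Each inequality compares two functions that agree at `0` through the sign of a derivative:
`T(x) < x < t(x)`, hence `(c C)' < 0` and `c C < 1`, which is equivalent to `T < s`. For `p ≥ 2`
also `T ^ (p - 2) ≤ t ^ (p - 2)`, which gives `c S + s C < 2 x`, i.e. `(s S)' < (x ^ 2)'`, so
`s S < x ^ 2`: the right inequality. For the left one, Hölder's inequality applied to
`1 = C ^ (p / (p + 1)) (C ^ (-p)) ^ (1 / (p + 1))` on `[0, x]` gives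
`x ^ (p + 1) ≤ S ^ p T < S ^ p s`.
-/

open MeasureTheory intervalIntegral

theorem lt_of_hasDerivAt_pos {f f' : ℝ → ℝ} {a b : ℝ} (hab : a < b)
    (hf : ContinuousOn f (Icc a b)) (hf' : ∀ x ∈ Ioo a b, HasDerivAt f (f' x) x)
    (hpos : ∀ x ∈ Ioo a b, 0 < f' x) : f a < f b := by
  refine strictMonoOn_of_deriv_pos (convex_Icc a b) hf (fun x hx => ?_)
    (left_mem_Icc.2 hab.le) (right_mem_Icc.2 hab.le) hab
  rw [interior_Icc] at hx
  exact (hf' x hx).deriv ▸ hpos x hx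

theorem integral_rpow_mul_rpow_le {f g : ℝ → ℝ} {a b u v : ℝ} (hab : a ≤ b)
    (hf : ContinuousOn f (Icc a b)) (hg : ContinuousOn g (Icc a b))
    (hf0 : ∀ x ∈ Icc a b, 0 ≤ f x) (hg0 : ∀ x ∈ Icc a b, 0 ≤ g x)
    (hF : 0 < ∫ x in a..b, f x) (hG : 0 < ∫ x in a..b, g x)
    (hu : 0 ≤ u) (hv : 0 ≤ v) (huv : u + v = 1) :
    ∫ x in a..b, f x ^ u * g x ^ v ≤ (∫ x in a..b, f x) ^ u * (∫ x in a..b, g x) ^ v := by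
  set F := ∫ x in a..b, f x
  set G := ∫ x in a..b, g x
  have hfi : IntervalIntegrable f volume a b := hf.intervalIntegrable_of_Icc hab
  have hgi : IntervalIntegrable g volume a b := hg.intervalIntegrable_of_Icc hab
  -- weighted AM-GM applied to `f / F` and `g / G`, then integrated
  have hpt : ∀ x ∈ Icc a b,
      f x ^ u * g x ^ v ≤ F ^ u * G ^ v * (u / F * f x + v / G * g x) := by
    intro x hx
    have h := geom_mean_le_arith_mean2_weighted hu hv (div_nonneg (hf0 x hx) hF.le)
      (div_nonneg (hg0 x hx) hG.le) huv
    rw [div_rpow (hf0 x hx) hF.le, div_rpow (hg0 x hx) hG.le] at h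
    have hFu := rpow_pos_of_pos hF u
    have hGv := rpow_pos_of_pos hG v
    calc f x ^ u * g x ^ v = F ^ u * G ^ v * (f x ^ u / F ^ u * (g x ^ v / G ^ v)) := by
          field_simp
      _ ≤ F ^ u * G ^ v * (u / F * f x + v / G * g x) := by
          gcongr
          exact h.trans_eq (by ring)
  calc ∫ x in a..b, f x ^ u * g x ^ v
      ≤ ∫ x in a..b, F ^ u * G ^ v * (u / F * f x + v / G * g x) :=
        integral_mono_on hab
          (((hf.rpow_const fun _ _ => Or.inr hu).mul
            (hg.rpow_const fun _ _ => Or.inr hv)).intervalIntegrable_of_Icc hab)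
          (((hfi.const_mul _).add (hgi.const_mul _)).const_mul _) hpt
    _ = F ^ u * G ^ v := by
        rw [intervalIntegral.integral_const_mul, integral_add (hfi.const_mul _) (hgi.const_mul _),
          intervalIntegral.integral_const_mul, intervalIntegral.integral_const_mul]
        change F ^ u * G ^ v * (u / F * F + v / G * G) = F ^ u * G ^ v
        rw [div_mul_cancel₀ _ hF.ne', div_mul_cancel₀ _ hG.ne', huv, mul_one]

theorem hasDerivAt_integral_of_continuousOn {k : ℝ → ℝ} {U : Set ℝ} {a x : ℝ}
    (hint : IntervalIntegrable k volume a x) (hU : IsOpen U) (hx : x ∈ U)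
    (hk : ContinuousOn k U) : HasDerivAt (fun y => ∫ t in a..y, k t) (k x) x :=
  integral_hasDerivAt_right hint (hk.stronglyMeasurableAtFilter hU x hx)
    (hk.continuousAt (hU.mem_nhds hx))

theorem strictMonoOn_integral_of_pos {k : ℝ → ℝ} {I : Set ℝ} {a : ℝ} (hI : I.OrdConnected)
    (hint : ∀ x ∈ I, ∀ y ∈ I, IntervalIntegrable k volume x y)
    (hpos : ∀ t ∈ interior I, 0 < k t) (ha : a ∈ I) :
    StrictMonoOn (fun x => ∫ t in a..x, k t) I := by
  intro x hx y hy hxy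
  show ∫ t in a..x, k t < ∫ t in a..y, k t
  have hsub : Ioo x y ⊆ interior I := interior_maximal (Ioo_subset_Icc_self.trans (hI.out hx hy))
    isOpen_Ioo
  rw [← integral_add_adjacent_intervals (hint a ha x hx) (hint x hx y hy)]
  exact lt_add_of_pos_right _
    (intervalIntegral_pos_of_pos_on (hint x hx y hy) (fun t ht => hpos t (hsub ht)) hxy)

section InverseFunction

variable {f : ℝ → ℝ} {I : Set ℝ}

theorem StrictMonoOn.strictMonoOn_invFunOn_image (hf : StrictMonoOn f I) :
    StrictMonoOn (Function.invFunOn f I) (f '' I) := by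
  rintro _ ⟨x, hx, rfl⟩ _ ⟨y, hy, rfl⟩ hxy
  rw [hf.injOn.leftInvOn_invFunOn hx, hf.injOn.leftInvOn_invFunOn hy]
  exact (hf.lt_iff_lt hx hy).1 hxy

theorem StrictMonoOn.continuousAt_invFunOn (hf : StrictMonoOn f I) {y : ℝ}
    (hy : f '' I ∈ 𝓝 y) (hI : I ∈ 𝓝 (Function.invFunOn f I y)) :
    ContinuousAt (Function.invFunOn f I) y :=
  hf.strictMonoOn_invFunOn_image.continuousAt_of_image_mem_nhds hy
    (by rwa [hf.injOn.leftInvOn_invFunOn.image_image])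

theorem StrictMonoOn.continuousWithinAt_Ici_invFunOn (hf : StrictMonoOn f I) {y : ℝ}
    (hy : f '' I ∈ 𝓝[≥] y) (hI : I ∈ 𝓝[≥] Function.invFunOn f I y) :
    ContinuousWithinAt (Function.invFunOn f I) (Ici y) y :=
  hf.strictMonoOn_invFunOn_image.continuousWithinAt_right_of_image_mem_nhdsWithin hy
    (by rwa [hf.injOn.leftInvOn_invFunOn.image_image])

theorem StrictMonoOn.hasDerivAt_invFunOn (hf : StrictMonoOn f I) {y f' : ℝ}
    (hy : f '' I ∈ 𝓝 y) (hI : I ∈ 𝓝 (Function.invFunOn f I y))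
    (hf' : HasDerivAt f f' (Function.invFunOn f I y)) (hf'0 : f' ≠ 0) :
    HasDerivAt (Function.invFunOn f I) f'⁻¹ y :=
  hf'.of_local_left_inverse (hf.continuousAt_invFunOn hy hI) hf'0
    (mem_of_superset hy fun _ hz => Function.invFunOn_eq hz)

end InverseFunction

theorem rpow_one_div_sub_one {B p : ℝ} (hB : 0 < B) (hp : p ≠ 0) :
    B ^ (1 / p - 1) = ((B ^ (1 / p)) ^ (p - 1))⁻¹ := by
  rw [← rpow_mul hB.le, ← rpow_neg hB.le]
  congr 1
  field_simp
  ring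

section Sine

variable {p x : ℝ}

theorem continuousOn_arcsinp_kernel (hp : 0 < p) :
    ContinuousOn (fun t : ℝ => (1 - t ^ p) ^ (-(1 / p))) (Ico 0 1) := fun _ ht =>
  ((continuousAt_const.sub (continuousAt_rpow_const _ _ (Or.inr hp.le))).rpow_const
    (Or.inl (sub_pos.2 (rpow_lt_one ht.1 ht.2 hp)).ne')).continuousWithinAt

theorem intervalIntegrable_arcsinp_kernel (hp : 1 < p) :
    IntervalIntegrable (fun t : ℝ => (1 - t ^ p) ^ (-(1 / p))) volume 0 1 := by
  -- dominated by `(1 - t) ^ (-1 / p)`, integrable because `-1 / p > -1`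
  have hr : -1 < -(1 / p) := by
    have : 1 / p < 1 := (div_lt_one (by linarith)).2 hp
    linarith
  have hdom : IntervalIntegrable (fun t : ℝ => (1 - t) ^ (-(1 / p))) volume 0 1 := by
    simpa using ((intervalIntegrable_rpow' (a := 0) (b := 1) hr).comp_sub_left 1).symm
  rw [intervalIntegrable_iff_integrableOn_Ioo_of_le zero_le_one] at hdom ⊢
  refine hdom.mono' (((continuousOn_arcsinp_kernel (by linarith)).mono
    Ioo_subset_Ico_self).aestronglyMeasurable measurableSet_Ioo)
    (ae_restrict_of_forall_mem measurableSet_Ioo fun t ht => ?_)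
  have hbase : 0 < 1 - t ^ p := sub_pos.2 (rpow_lt_one ht.1.le ht.2 (by linarith))
  rw [norm_of_nonneg (rpow_nonneg hbase.le _)]
  exact rpow_le_rpow_of_nonpos (sub_pos.2 ht.2)
    (sub_le_sub_left (rpow_le_self_of_le_one ht.1.le ht.2.le hp.le) 1)
    (neg_nonpos.2 (one_div_pos.2 (by linarith)).le)

theorem arcsinp_zero : arcsinp p 0 = 0 := integral_same

theorem strictMonoOn_arcsinp (hp : 1 < p) : StrictMonoOn (arcsinp p) (Icc 0 1) :=
  strictMonoOn_integral_of_pos ordConnected_Icc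
    (fun a ha b hb => (intervalIntegrable_arcsinp_kernel hp).mono_set
      (by rw [uIcc_of_le zero_le_one]; exact uIcc_subset_Icc ha hb))
    (fun t ht => by
      rw [interior_Icc] at ht
      exact rpow_pos_of_pos (sub_pos.2 (rpow_lt_one ht.1.le ht.2 (by linarith))) _)
    (left_mem_Icc.2 zero_le_one)

theorem continuousOn_arcsinp (hp : 1 < p) : ContinuousOn (arcsinp p) (Icc 0 1) := by
  have h := continuousOn_primitive_interval (a := 0) (b := 1) (μ := volume)
    (f := fun t : ℝ => (1 - t ^ p) ^ (-(1 / p)))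
    (by rw [uIcc_of_le zero_le_one, ← intervalIntegrable_iff_integrableOn_Icc_of_le zero_le_one]
        exact intervalIntegrable_arcsinp_kernel hp)
  rwa [uIcc_of_le zero_le_one] at h

theorem pipHalf_pos (hp : 1 < p) : 0 < pipHalf p := by
  have h := strictMonoOn_arcsinp hp (left_mem_Icc.2 zero_le_one) (right_mem_Icc.2 zero_le_one)
    zero_lt_one
  rwa [arcsinp_zero] at h

theorem image_arcsinp (hp : 1 < p) : arcsinp p '' Icc 0 1 = Icc 0 (pipHalf p) := by
  rw [(continuousOn_arcsinp hp).image_Icc_of_monotoneOn zero_le_one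
    (strictMonoOn_arcsinp hp).monotoneOn, arcsinp_zero]
  rfl

theorem hasDerivAt_arcsinp (hp : 0 < p) {t : ℝ} (ht : t ∈ Ioo 0 1) :
    HasDerivAt (arcsinp p) ((1 - t ^ p) ^ (-(1 / p))) t :=
  hasDerivAt_integral_of_continuousOn
    (((continuousOn_arcsinp_kernel hp).mono (Icc_subset_Ico_right ht.2)).intervalIntegrable_of_Icc
      ht.1.le)
    isOpen_Ioo ht ((continuousOn_arcsinp_kernel hp).mono Ioo_subset_Ico_self)

theorem sinp_mem_Icc (hp : 1 < p) (hx : x ∈ Icc 0 (pipHalf p)) : sinp p x ∈ Icc 0 1 :=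
  Function.invFunOn_mem (by rw [image_arcsinp hp]; exact hx : x ∈ arcsinp p '' Icc 0 1)

theorem sinp_arcsinp (hp : 1 < p) {t : ℝ} (ht : t ∈ Icc 0 1) : sinp p (arcsinp p t) = t :=
  (strictMonoOn_arcsinp hp).injOn.leftInvOn_invFunOn ht

theorem strictMonoOn_sinp (hp : 1 < p) : StrictMonoOn (sinp p) (Icc 0 (pipHalf p)) :=
  image_arcsinp hp ▸ (strictMonoOn_arcsinp hp).strictMonoOn_invFunOn_image

theorem sinp_zero (hp : 1 < p) : sinp p 0 = 0 := by
  simpa only [arcsinp_zero] using sinp_arcsinp hp (left_mem_Icc.2 zero_le_one)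

theorem sinp_pipHalf (hp : 1 < p) : sinp p (pipHalf p) = 1 :=
  sinp_arcsinp hp (right_mem_Icc.2 zero_le_one)

theorem sinp_mem_Ioo (hp : 1 < p) (hx : x ∈ Ioo 0 (pipHalf p)) : sinp p x ∈ Ioo 0 1 := by
  have hx' : x ∈ Icc 0 (pipHalf p) := Ioo_subset_Icc_self hx
  have h0 := strictMonoOn_sinp hp (left_mem_Icc.2 (pipHalf_pos hp).le) hx' hx.1
  have h1 := strictMonoOn_sinp hp hx' (right_mem_Icc.2 (pipHalf_pos hp).le) hx.2
  rw [sinp_zero hp] at h0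
  rw [sinp_pipHalf hp] at h1
  exact ⟨h0, h1⟩

theorem hasDerivAt_sinp (hp : 1 < p) (hx : x ∈ Ioo 0 (pipHalf p)) :
    HasDerivAt (sinp p) (cosp p x) x := by
  have hs := sinp_mem_Ioo hp hx
  have hbase : 0 < 1 - sinp p x ^ p := sub_pos.2 (rpow_lt_one hs.1.le hs.2 (by linarith))
  have h := (strictMonoOn_arcsinp hp).hasDerivAt_invFunOn
    (by rw [image_arcsinp hp]; exact Icc_mem_nhds hx.1 hx.2) (Icc_mem_nhds hs.1 hs.2)
    (hasDerivAt_arcsinp (by linarith) hs) (rpow_pos_of_pos hbase _).ne'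
  change HasDerivAt (sinp p) ((1 - sinp p x ^ p) ^ (-(1 / p)))⁻¹ x at h
  rwa [rpow_neg hbase.le, inv_inv] at h

theorem continuousOn_sinp (hp : 1 < p) : ContinuousOn (sinp p) (Ico 0 (pipHalf p)) := by
  intro x hx
  rcases hx.1.eq_or_lt with rfl | hx0
  · refine ((strictMonoOn_arcsinp hp).continuousWithinAt_Ici_invFunOn ?_ ?_).mono
      Ico_subset_Ici_self
    · rw [image_arcsinp hp]
      exact Icc_mem_nhdsGE (pipHalf_pos hp)
    · change Icc 0 1 ∈ 𝓝[≥] sinp p 0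
      rw [sinp_zero hp]
      exact Icc_mem_nhdsGE zero_lt_one
  · exact (hasDerivAt_sinp hp ⟨hx0, hx.2⟩).continuousAt.continuousWithinAt

theorem cosp_zero (hp : 1 < p) : cosp p 0 = 1 := by
  rw [cosp, sinp_zero hp, zero_rpow (by linarith), sub_zero, one_rpow]

theorem cosp_pos (hp : 1 < p) (hx : x ∈ Ioo 0 (pipHalf p)) : 0 < cosp p x := by
  have hs := sinp_mem_Ioo hp hx
  exact rpow_pos_of_pos (sub_pos.2 (rpow_lt_one hs.1.le hs.2 (by linarith))) _

theorem cosp_rpow (hp : 1 < p) (hx : x ∈ Icc 0 (pipHalf p)) :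
    cosp p x ^ p = 1 - sinp p x ^ p := by
  have hs := sinp_mem_Icc hp hx
  rw [cosp, ← rpow_mul (sub_nonneg.2 (rpow_le_one hs.1 hs.2 (by linarith))),
    one_div_mul_cancel (by linarith), rpow_one]

theorem continuousOn_cosp (hp : 1 < p) : ContinuousOn (cosp p) (Ico 0 (pipHalf p)) :=
  (continuousOn_const.sub ((continuousOn_sinp hp).rpow_const fun _ _ => Or.inr (by linarith))
    ).rpow_const fun _ _ => Or.inr (by positivity)

theorem hasDerivAt_cosp (hp : 1 < p) (hx : x ∈ Ioo 0 (pipHalf p)) :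
    HasDerivAt (cosp p) (-(cosp p x * tanp p x ^ (p - 1))) x := by
  have hs := sinp_mem_Ioo hp hx
  have hc := cosp_pos hp hx
  have hbase : 0 < 1 - sinp p x ^ p := sub_pos.2 (rpow_lt_one hs.1.le hs.2 (by linarith))
  have h := (((hasDerivAt_sinp hp hx).rpow_const (Or.inl hs.1.ne')).const_sub 1).rpow_const
    (p := 1 / p) (Or.inl hbase.ne')
  rw [rpow_one_div_sub_one hbase (by linarith), ← cosp] at h
  refine h.congr_deriv ?_
  rw [tanp, div_rpow hs.1.le hc.le]
  have := (rpow_pos_of_pos hc (p - 1)).ne'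
  field_simp

end Sine

section HyperbolicSine

variable {p x : ℝ}

theorem continuousOn_arsinhp_kernel (hp : 0 < p) :
    ContinuousOn (fun t : ℝ => (1 + t ^ p) ^ (-(1 / p))) (Ici 0) := fun _ ht =>
  ((continuousAt_const.add (continuousAt_rpow_const _ _ (Or.inr hp.le))).rpow_const
    (Or.inl (add_pos_of_pos_of_nonneg one_pos (rpow_nonneg ht p)).ne')).continuousWithinAt

theorem intervalIntegrable_arsinhp_kernel (hp : 0 < p) {a b : ℝ} (ha : 0 ≤ a) (hb : 0 ≤ b) :
    IntervalIntegrable (fun t : ℝ => (1 + t ^ p) ^ (-(1 / p))) volume a b :=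
  ((continuousOn_arsinhp_kernel hp).mono fun _ ht => (le_min ha hb).trans ht.1).intervalIntegrable

theorem arsinhp_zero : arsinhp p 0 = 0 := integral_same

theorem strictMonoOn_arsinhp (hp : 0 < p) : StrictMonoOn (arsinhp p) (Ici 0) :=
  strictMonoOn_integral_of_pos ordConnected_Ici
    (fun _ ha _ hb => intervalIntegrable_arsinhp_kernel hp ha hb)
    (fun t ht => by
      rw [interior_Ici] at ht
      exact rpow_pos_of_pos (add_pos_of_pos_of_nonneg one_pos (rpow_nonneg ht.le p)) _)
    self_mem_Ici

theorem continuousOn_arsinhp (hp : 0 < p) {M : ℝ} (hM : 0 ≤ M) :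
    ContinuousOn (arsinhp p) (Icc 0 M) := by
  have h := continuousOn_primitive_interval (a := 0) (b := M) (μ := volume)
    (f := fun t : ℝ => (1 + t ^ p) ^ (-(1 / p)))
    (by rw [uIcc_of_le hM, ← intervalIntegrable_iff_integrableOn_Icc_of_le hM]
        exact intervalIntegrable_arsinhp_kernel hp le_rfl hM)
  rwa [uIcc_of_le hM] at h

theorem hasDerivAt_arsinhp (hp : 0 < p) {t : ℝ} (ht : 0 < t) :
    HasDerivAt (arsinhp p) ((1 + t ^ p) ^ (-(1 / p))) t :=
  hasDerivAt_integral_of_continuousOn (intervalIntegrable_arsinhp_kernel hp le_rfl ht.le)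
    isOpen_Ioi ht ((continuousOn_arsinhp_kernel hp).mono Ioi_subset_Ici_self)

theorem log_one_add_le_arsinhp (hp : 1 ≤ p) {M : ℝ} (hM : 0 ≤ M) :
    log (1 + M) ≤ arsinhp p M := by
  have hlog : ∫ t in (0 : ℝ)..M, (t + 1)⁻¹ = log (1 + M) := by
    rw [integral_comp_add_right (fun t => t⁻¹), zero_add,
      integral_inv_of_pos one_pos (by linarith), div_one, add_comm]
  rw [← hlog]
  refine integral_mono_on hM ?_ (intervalIntegrable_arsinhp_kernel (by linarith) le_rfl hM)
    fun t ht => ?_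
  · refine ContinuousOn.intervalIntegrable_of_Icc hM ?_
    exact (continuous_add_const 1).continuousOn.inv₀ fun t ht => by linarith [ht.1]
  · have h := rpow_add_rpow_le_add zero_le_one ht.1 hp
    rw [one_rpow] at h
    have hbase : 0 < 1 + t ^ p := add_pos_of_pos_of_nonneg one_pos (rpow_nonneg ht.1 p)
    rw [rpow_neg hbase.le, inv_le_inv₀ (by linarith [ht.1]) (rpow_pos_of_pos hbase _)]
    linarith

theorem image_arsinhp (hp : 1 ≤ p) : arsinhp p '' Ici 0 = Ici 0 := by
  have hp0 : 0 < p := by linarith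
  refine Subset.antisymm ?_ fun y hy => ?_
  · rintro _ ⟨t, ht, rfl⟩
    exact arsinhp_zero (p := p) ▸ (strictMonoOn_arsinhp hp0).monotoneOn self_mem_Ici ht ht
  · have hM : y ≤ arsinhp p (exp y) := calc
      y = log (exp y) := (log_exp y).symm
      _ ≤ log (1 + exp y) := log_le_log (exp_pos y) (by linarith)
      _ ≤ arsinhp p (exp y) := log_one_add_le_arsinhp hp (exp_pos y).le
    obtain ⟨t, ht, rfl⟩ := intermediate_value_Icc (exp_pos y).le
      (continuousOn_arsinhp hp0 (exp_pos y).le) ⟨by rwa [arsinhp_zero], hM⟩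
    exact ⟨t, ht.1, rfl⟩

theorem sinhp_nonneg (hp : 1 ≤ p) (hx : 0 ≤ x) : 0 ≤ sinhp p x :=
  Function.invFunOn_mem (by rw [image_arsinhp hp]; exact hx : x ∈ arsinhp p '' Ici 0)

theorem strictMonoOn_sinhp (hp : 1 ≤ p) : StrictMonoOn (sinhp p) (Ici 0) :=
  image_arsinhp hp ▸ (strictMonoOn_arsinhp (by linarith)).strictMonoOn_invFunOn_image

theorem sinhp_zero (hp : 1 ≤ p) : sinhp p 0 = 0 := by
  have h : sinhp p (arsinhp p 0) = 0 :=
    (strictMonoOn_arsinhp (by linarith)).injOn.leftInvOn_invFunOn self_mem_Ici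
  rwa [arsinhp_zero] at h

theorem sinhp_pos (hp : 1 ≤ p) (hx : 0 < x) : 0 < sinhp p x :=
  sinhp_zero hp ▸ strictMonoOn_sinhp hp self_mem_Ici hx.le hx

theorem hasDerivAt_sinhp (hp : 1 ≤ p) (hx : 0 < x) : HasDerivAt (sinhp p) (coshp p x) x := by
  have hS := sinhp_pos hp hx
  have hbase : 0 < 1 + sinhp p x ^ p := add_pos_of_pos_of_nonneg one_pos (rpow_nonneg hS.le p)
  have h := (strictMonoOn_arsinhp (by linarith)).hasDerivAt_invFunOn
    (by rw [image_arsinhp hp]; exact Ici_mem_nhds hx) (Ici_mem_nhds hS)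
    (hasDerivAt_arsinhp (by linarith) hS) (rpow_pos_of_pos hbase _).ne'
  change HasDerivAt (sinhp p) ((1 + sinhp p x ^ p) ^ (-(1 / p)))⁻¹ x at h
  rwa [rpow_neg hbase.le, inv_inv] at h

theorem continuousOn_sinhp (hp : 1 ≤ p) : ContinuousOn (sinhp p) (Ici 0) := by
  intro x hx
  rcases (mem_Ici.1 hx).eq_or_lt with rfl | hx0
  · refine (strictMonoOn_arsinhp (by linarith)).continuousWithinAt_Ici_invFunOn ?_ ?_
    · rw [image_arsinhp hp]
      exact self_mem_nhdsWithin
    · change Ici 0 ∈ 𝓝[≥] sinhp p 0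
      rw [sinhp_zero hp]
      exact self_mem_nhdsWithin
  · exact (hasDerivAt_sinhp hp hx0).continuousAt.continuousWithinAt

theorem coshp_zero (hp : 1 ≤ p) : coshp p 0 = 1 := by
  rw [coshp, sinhp_zero hp, zero_rpow (by linarith), add_zero, one_rpow]

theorem coshp_pos (hp : 1 ≤ p) (hx : 0 ≤ x) : 0 < coshp p x :=
  rpow_pos_of_pos (add_pos_of_pos_of_nonneg one_pos (rpow_nonneg (sinhp_nonneg hp hx) p)) _

theorem coshp_rpow (hp : 1 ≤ p) (hx : 0 ≤ x) : coshp p x ^ p = 1 + sinhp p x ^ p := by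
  rw [coshp, ← rpow_mul (add_nonneg zero_le_one (rpow_nonneg (sinhp_nonneg hp hx) p)),
    one_div_mul_cancel (by linarith), rpow_one]

theorem continuousOn_coshp (hp : 1 ≤ p) : ContinuousOn (coshp p) (Ici 0) :=
  (continuousOn_const.add ((continuousOn_sinhp hp).rpow_const fun _ _ => Or.inr (by linarith))
    ).rpow_const fun _ _ => Or.inr (by positivity)

theorem hasDerivAt_coshp (hp : 1 ≤ p) (hx : 0 < x) :
    HasDerivAt (coshp p) (coshp p x * tanhp p x ^ (p - 1)) x := by
  have hS := sinhp_pos hp hx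
  have hC := coshp_pos hp hx.le
  have hbase : 0 < 1 + sinhp p x ^ p := add_pos_of_pos_of_nonneg one_pos (rpow_nonneg hS.le p)
  have h := (((hasDerivAt_sinhp hp hx).rpow_const (Or.inl hS.ne')).const_add 1).rpow_const
    (p := 1 / p) (Or.inl hbase.ne')
  rw [rpow_one_div_sub_one hbase (by linarith), ← coshp] at h
  refine h.congr_deriv ?_
  rw [tanhp, div_rpow hS.le hC.le]
  have := (rpow_pos_of_pos hC (p - 1)).ne'
  field_simp

theorem tanhp_pos (hp : 1 ≤ p) (hx : 0 < x) : 0 < tanhp p x :=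
  div_pos (sinhp_pos hp hx) (coshp_pos hp hx.le)

theorem tanhp_zero (hp : 1 ≤ p) : tanhp p 0 = 0 := by
  rw [tanhp, sinhp_zero hp, zero_div]

theorem continuousOn_tanhp (hp : 1 ≤ p) : ContinuousOn (tanhp p) (Ici 0) :=
  (continuousOn_sinhp hp).div (continuousOn_coshp hp) fun _ hx => (coshp_pos hp hx).ne'

theorem one_sub_tanhp_rpow (hp : 1 ≤ p) (hx : 0 ≤ x) :
    1 - tanhp p x ^ p = coshp p x ^ (-p) := by
  have hC := coshp_pos hp hx
  have hCp := coshp_rpow hp hx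
  have := (rpow_pos_of_pos hC p).ne'
  rw [tanhp, div_rpow (sinhp_nonneg hp hx) hC.le, rpow_neg hC.le]
  field_simp
  linarith

theorem hasDerivAt_tanhp (hp : 1 ≤ p) (hx : 0 < x) :
    HasDerivAt (tanhp p) (coshp p x ^ (-p)) x := by
  have hC := coshp_pos hp hx.le
  have hT := tanhp_pos hp hx
  have hS : sinhp p x = tanhp p x * coshp p x := (div_mul_cancel₀ _ hC.ne').symm
  refine ((hasDerivAt_sinhp hp hx).div (hasDerivAt_coshp hp hx) hC.ne').congr_deriv ?_
  rw [← one_sub_tanhp_rpow hp hx.le, rpow_sub_one hT.ne', hS]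
  field_simp

end HyperbolicSine

theorem mul_div_rpow_sub_one {a b p : ℝ} (ha : 0 < a) (hb : 0 < b) :
    b * (a / b) ^ (p - 1) = a * (a / b) ^ (p - 2) := by
  rw [show p - 1 = p - 2 + 1 by ring, rpow_add_one (div_pos ha hb).ne']
  field_simp

section Inequalities

variable {p x : ℝ}

theorem tanp_pos (hp : 1 < p) (hx : x ∈ Ioo 0 (pipHalf p)) : 0 < tanp p x :=
  div_pos (sinp_mem_Ioo hp hx).1 (cosp_pos hp hx)

theorem tanhp_lt_self (hp : 1 ≤ p) (hx : 0 < x) : tanhp p x < x := by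
  have h := lt_of_hasDerivAt_pos (f := fun y => y * coshp p y - sinhp p y)
    (f' := fun y => y * (coshp p y * tanhp p y ^ (p - 1))) hx
    (((continuousOn_id.mul (continuousOn_coshp hp)).sub (continuousOn_sinhp hp)).mono
      Icc_subset_Ici_self)
    (fun y hy => (((hasDerivAt_id' y).mul (hasDerivAt_coshp hp hy.1)).sub
      (hasDerivAt_sinhp hp hy.1)).congr_deriv (by ring))
    (fun y hy => mul_pos hy.1
      (mul_pos (coshp_pos hp hy.1.le) (rpow_pos_of_pos (tanhp_pos hp hy.1) _)))
  simp only [zero_mul, sinhp_zero hp, sub_zero] at h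
  rw [tanhp, div_lt_iff₀ (coshp_pos hp hx.le)]
  linarith

theorem lt_tanp (hp : 1 < p) (hx : x ∈ Ioo 0 (pipHalf p)) : x < tanp p x := by
  have hIoo : Ioo 0 x ⊆ Ioo 0 (pipHalf p) := Ioo_subset_Ioo_right hx.2.le
  have h := lt_of_hasDerivAt_pos (f := fun y => sinp p y - y * cosp p y)
    (f' := fun y => y * (cosp p y * tanp p y ^ (p - 1))) hx.1
    (((continuousOn_sinp hp).sub (continuousOn_id.mul (continuousOn_cosp hp))).mono
      (Icc_subset_Ico_right hx.2))
    (fun y hy => ((hasDerivAt_sinp hp (hIoo hy)).sub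
      ((hasDerivAt_id' y).mul (hasDerivAt_cosp hp (hIoo hy)))).congr_deriv (by ring))
    (fun y hy => mul_pos hy.1 (mul_pos (cosp_pos hp (hIoo hy))
      (rpow_pos_of_pos (tanp_pos hp (hIoo hy)) _)))
  simp only [zero_mul, sinp_zero hp, sub_zero] at h
  rw [tanp, lt_div_iff₀ (cosp_pos hp hx)]
  linarith

theorem tanhp_lt_tanp (hp : 1 < p) (hx : x ∈ Ioo 0 (pipHalf p)) : tanhp p x < tanp p x :=
  (tanhp_lt_self hp.le hx.1).trans (lt_tanp hp hx)

theorem cosp_mul_coshp_lt_one (hp : 1 < p) (hx : x ∈ Ioo 0 (pipHalf p)) :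
    cosp p x * coshp p x < 1 := by
  have hIoo : Ioo 0 x ⊆ Ioo 0 (pipHalf p) := Ioo_subset_Ioo_right hx.2.le
  have h := lt_of_hasDerivAt_pos (f := fun y => -(cosp p y * coshp p y))
    (f' := fun y => cosp p y * coshp p y * (tanp p y ^ (p - 1) - tanhp p y ^ (p - 1))) hx.1
    (((continuousOn_cosp hp).mono (Icc_subset_Ico_right hx.2)).mul
      ((continuousOn_coshp hp.le).mono Icc_subset_Ici_self)).neg
    (fun y hy => ((hasDerivAt_cosp hp (hIoo hy)).mul
      (hasDerivAt_coshp hp.le hy.1)).neg.congr_deriv (by ring))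
    (fun y hy => mul_pos (mul_pos (cosp_pos hp (hIoo hy)) (coshp_pos hp.le hy.1.le))
      (sub_pos.2 (rpow_lt_rpow (tanhp_pos hp.le hy.1).le (tanhp_lt_tanp hp (hIoo hy))
        (by linarith))))
  simp only [cosp_zero hp, coshp_zero hp.le, one_mul] at h
  linarith

theorem tanhp_lt_sinp (hp : 1 < p) (hx : x ∈ Ioo 0 (pipHalf p)) : tanhp p x < sinp p x := by
  -- `sinp ^ p = 1 - cosp ^ p` and `tanhp ^ p = 1 - coshp ^ (-p)`, so this is `cosp * coshp < 1`
  have hc := cosp_pos hp hx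
  have hC := coshp_pos hp.le hx.1.le
  have hpow : cosp p x ^ p < coshp p x ^ (-p) := by
    rw [rpow_neg hC.le, ← one_div, lt_div_iff₀ (rpow_pos_of_pos hC p), ← mul_rpow hc.le hC.le]
    exact rpow_lt_one (mul_nonneg hc.le hC.le) (cosp_mul_coshp_lt_one hp hx) (by linarith)
  have h : tanhp p x ^ p < sinp p x ^ p := by
    linarith [one_sub_tanhp_rpow hp.le hx.1.le, cosp_rpow hp (Ioo_subset_Icc_self hx)]
  exact (rpow_lt_rpow_iff (tanhp_pos hp.le hx.1).le (sinp_mem_Ioo hp hx).1.le (by linarith)).1 h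

theorem cosp_mul_sinhp_add_sinp_mul_coshp_lt (hp : 2 ≤ p) (hx : x ∈ Ioo 0 (pipHalf p)) :
    cosp p x * sinhp p x + sinp p x * coshp p x < 2 * x := by
  have hp1 : 1 < p := by linarith
  have hIoo : Ioo 0 x ⊆ Ioo 0 (pipHalf p) := Ioo_subset_Ioo_right hx.2.le
  have hIcc : Icc 0 x ⊆ Ico 0 (pipHalf p) := Icc_subset_Ico_right hx.2
  have hIci : Icc 0 x ⊆ Ici 0 := Icc_subset_Ici_self
  have hderiv : ∀ y ∈ Ioo 0 x, HasDerivAt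
      (fun y => 2 * y - (cosp p y * sinhp p y + sinp p y * coshp p y))
      (2 * (1 - cosp p y * coshp p y) +
        sinp p y * sinhp p y * (tanp p y ^ (p - 2) - tanhp p y ^ (p - 2))) y := by
    intro y hy
    have hc : cosp p y * tanp p y ^ (p - 1) = sinp p y * tanp p y ^ (p - 2) :=
      mul_div_rpow_sub_one (sinp_mem_Ioo hp1 (hIoo hy)).1 (cosp_pos hp1 (hIoo hy))
    have hC : coshp p y * tanhp p y ^ (p - 1) = sinhp p y * tanhp p y ^ (p - 2) :=
      mul_div_rpow_sub_one (sinhp_pos hp1.le hy.1) (coshp_pos hp1.le hy.1.le)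
    refine (((hasDerivAt_id' y).const_mul 2).sub
      (((hasDerivAt_cosp hp1 (hIoo hy)).mul (hasDerivAt_sinhp hp1.le hy.1)).add
        ((hasDerivAt_sinp hp1 (hIoo hy)).mul (hasDerivAt_coshp hp1.le hy.1)))).congr_deriv ?_
    rw [hc, hC]
    ring
  have h := lt_of_hasDerivAt_pos
    (f := fun y => 2 * y - (cosp p y * sinhp p y + sinp p y * coshp p y)) hx.1
    ((continuousOn_const.mul continuousOn_id).sub
      ((((continuousOn_cosp hp1).mono hIcc).mul ((continuousOn_sinhp hp1.le).mono hIci)).add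
        (((continuousOn_sinp hp1).mono hIcc).mul ((continuousOn_coshp hp1.le).mono hIci))))
    hderiv
    (fun y hy => add_pos_of_pos_of_nonneg
      (by linarith [cosp_mul_coshp_lt_one hp1 (hIoo hy)])
      (mul_nonneg (mul_nonneg (sinp_mem_Ioo hp1 (hIoo hy)).1.le (sinhp_pos hp1.le hy.1).le)
        (sub_nonneg.2 (rpow_le_rpow (tanhp_pos hp1.le hy.1).le
          (tanhp_lt_tanp hp1 (hIoo hy)).le (by linarith)))))
  simp only [mul_zero, sinhp_zero hp1.le, sinp_zero hp1, zero_mul, add_zero, sub_zero] at h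
  linarith

theorem sinp_mul_sinhp_lt_sq (hp : 2 ≤ p) (hx : x ∈ Ioo 0 (pipHalf p)) :
    sinp p x * sinhp p x < x ^ 2 := by
  have hp1 : 1 < p := by linarith
  have hIoo : Ioo 0 x ⊆ Ioo 0 (pipHalf p) := Ioo_subset_Ioo_right hx.2.le
  have hIcc : Icc 0 x ⊆ Ico 0 (pipHalf p) := Icc_subset_Ico_right hx.2
  have h := lt_of_hasDerivAt_pos (f := fun y => y ^ 2 - sinp p y * sinhp p y)
    (f' := fun y => 2 * y - (cosp p y * sinhp p y + sinp p y * coshp p y)) hx.1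
    ((continuous_pow 2).continuousOn.sub (((continuousOn_sinp hp1).mono hIcc).mul
      ((continuousOn_sinhp hp1.le).mono Icc_subset_Ici_self)))
    (fun y hy => ((hasDerivAt_pow 2 y).sub ((hasDerivAt_sinp hp1 (hIoo hy)).mul
      (hasDerivAt_sinhp hp1.le hy.1))).congr_deriv (by ring))
    (fun y hy => by linarith [cosp_mul_sinhp_add_sinp_mul_coshp_lt hp (hIoo hy)])
  simp only [sinp_zero hp1, zero_mul, sub_zero, ne_eq, OfNat.ofNat_ne_zero, not_false_eq_true,
    zero_pow] at h
  linarith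

end Inequalities

theorem rpow_add_one_le_sinhp_rpow_mul_tanhp {p x : ℝ} (hp : 1 ≤ p) (hx : 0 < x) :
    x ^ (p + 1) ≤ sinhp p x ^ p * tanhp p x := by
  have hp1 : 0 < p + 1 := by linarith
  have hC : ContinuousOn (coshp p) (Icc 0 x) := (continuousOn_coshp hp).mono Icc_subset_Ici_self
  have hCp : ContinuousOn (fun y => coshp p y ^ (-p)) (Icc 0 x) :=
    hC.rpow_const fun y hy => Or.inl (coshp_pos hp hy.1).ne'
  have hS : ∫ y in (0 : ℝ)..x, coshp p y = sinhp p x := by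
    rw [integral_eq_sub_of_hasDerivAt_of_le hx.le ((continuousOn_sinhp hp).mono Icc_subset_Ici_self)
      (fun y hy => hasDerivAt_sinhp hp hy.1) (hC.intervalIntegrable_of_Icc hx.le), sinhp_zero hp,
      sub_zero]
  have hT : ∫ y in (0 : ℝ)..x, coshp p y ^ (-p) = tanhp p x := by
    rw [integral_eq_sub_of_hasDerivAt_of_le hx.le ((continuousOn_tanhp hp).mono Icc_subset_Ici_self)
      (fun y hy => hasDerivAt_tanhp hp hy.1) (hCp.intervalIntegrable_of_Icc hx.le)]
    rw [tanhp_zero hp, sub_zero]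
  -- Hölder's inequality for `1 = coshp ^ (p / (p + 1)) * (coshp ^ (-p)) ^ (1 / (p + 1))`
  have hone : ∫ y in (0 : ℝ)..x, coshp p y ^ (p / (p + 1)) * (coshp p y ^ (-p)) ^ (1 / (p + 1))
      = x := by
    have hpt : ∀ y ∈ uIcc 0 x,
        coshp p y ^ (p / (p + 1)) * (coshp p y ^ (-p)) ^ (1 / (p + 1)) = 1 := by
      intro y hy
      rw [uIcc_of_le hx.le] at hy
      have hCy : 0 < coshp p y := coshp_pos hp hy.1
      rw [← rpow_mul hCy.le, ← rpow_add hCy, show p / (p + 1) + -p * (1 / (p + 1)) = 0 by ring,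
        rpow_zero]
    rw [integral_congr hpt]
    simp
  have h := integral_rpow_mul_rpow_le (u := p / (p + 1)) (v := 1 / (p + 1)) hx.le hC hCp
    (fun y hy => (coshp_pos hp hy.1).le)
    (fun y hy => (rpow_pos_of_pos (coshp_pos hp hy.1) _).le)
    (hS ▸ sinhp_pos hp hx) (hT ▸ tanhp_pos hp hx) (by positivity) (by positivity)
    (by field_simp)
  rw [hone, hS, hT] at h
  calc x ^ (p + 1)
      ≤ (sinhp p x ^ (p / (p + 1)) * tanhp p x ^ (1 / (p + 1))) ^ (p + 1) :=
        rpow_le_rpow hx.le h hp1.le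
    _ = sinhp p x ^ p * tanhp p x := by
        rw [mul_rpow (rpow_nonneg (sinhp_pos hp hx).le _) (rpow_nonneg (tanhp_pos hp hx).le _),
          ← rpow_mul (sinhp_pos hp hx).le, ← rpow_mul (tanhp_pos hp hx).le,
          div_mul_cancel₀ _ hp1.ne', one_div_mul_cancel hp1.ne', rpow_one]

theorem rpow_add_one_lt_sinp_mul_sinhp_rpow {p x : ℝ} (hp : 1 < p)
    (hx : x ∈ Ioo 0 (pipHalf p)) :
    x ^ (p + 1) < sinp p x * sinhp p x ^ p :=
  calc x ^ (p + 1) ≤ sinhp p x ^ p * tanhp p x := rpow_add_one_le_sinhp_rpow_mul_tanhp hp.le hx.1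
    _ < sinhp p x ^ p * sinp p x :=
        mul_lt_mul_of_pos_left (tanhp_lt_sinp hp hx) (rpow_pos_of_pos (sinhp_pos hp.le hx.1) p)
    _ = sinp p x * sinhp p x ^ p := mul_comm _ _

theorem stmt_2 (p : ℝ) (hp : 2 ≤ p) (x : ℝ) (hx : x ∈ Set.Ioo 0 (pipHalf p)) :
    (x / sinhp p x) ^ p < sinp p x / x ∧ sinp p x / x < x / sinhp p x := by
  have hS := sinhp_pos (by linarith) hx.1
  constructor
  · rw [div_rpow hx.1.le hS.le, div_lt_div_iff₀ (rpow_pos_of_pos hS p) hx.1,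
      ← rpow_add_one hx.1.ne']
    exact rpow_add_one_lt_sinp_mul_sinhp_rpow (by linarith) hx
  · rw [div_lt_div_iff₀ hx.1 hS, ← sq]
    exact sinp_mul_sinhp_lt_sq hp hx
end

section
/- For every p > 1 and every x > 0, one has tanh_p(x) > x / cosh_p(x)^p; equivalently, sinh_p(x) · cosh_p(x)^(p−1) > x. -/
open Real Set Filter Topology

lemma aux_cont {p : ℝ} (hp : 1 < p) :
    ContinuousOn (fun t : ℝ => (1 + t ^ p) ^ (-(1/p))) (Set.Ici 0) := by
  intro t ht
  have h1 : ContinuousAt (fun t : ℝ => 1 + t ^ p) t :=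
    continuousAt_const.add (Real.continuousAt_rpow_const t p (Or.inr (by linarith)))
  have h2 : (1 : ℝ) ≤ 1 + t ^ p := by
    have := Real.rpow_nonneg ht p
    linarith
  exact (h1.rpow_const (Or.inl (by linarith))).continuousWithinAt

lemma aux_intble {p : ℝ} (hp : 1 < p) {a b : ℝ} (ha : 0 ≤ a) (hb : 0 ≤ b) :
    IntervalIntegrable (fun t : ℝ => (1 + t ^ p) ^ (-(1/p))) MeasureTheory.volume a b := by
  apply ContinuousOn.intervalIntegrable
  exact (aux_cont hp).mono (fun t ht => le_trans (le_min ha hb) ht.1)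

theorem stmt_14 (p : ℝ) (hp : 1 < p) (x : ℝ) (hx : 0 < x) :
    tanhp p x > x / coshp p x ^ p ∧ sinhp p x * coshp p x ^ (p - 1) > x := by
  have hp0 : (0:ℝ) < p := by linarith
  -- existence of a preimage
  set M : ℝ := max 1 (Real.exp ((2:ℝ) ^ (1/p) * x)) with hM
  have hM1 : (1:ℝ) ≤ M := le_max_left _ _
  have hMx : arsinhp p M ≥ x := by
    have key : ∀ t ∈ Set.Icc (1:ℝ) M, (2:ℝ)^(-(1/p)) * t⁻¹ ≤ (1 + t ^ p) ^ (-(1/p)) := by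
      intro t ht
      have ht1 : (1:ℝ) ≤ t := ht.1
      have htp : (1:ℝ) ≤ t ^ p := Real.one_le_rpow ht1 hp0.le
      have h2t : (1 + t ^ p) ≤ 2 * t ^ p := by linarith
      have h1 : (2 * t ^ p) ^ (-(1/p)) ≤ (1 + t ^ p) ^ (-(1/p)) :=
        Real.rpow_le_rpow_of_nonpos (by positivity) h2t (neg_nonpos.mpr (by positivity))
      have h2 : (2 * t ^ p) ^ (-(1/p)) = (2:ℝ)^(-(1/p)) * t⁻¹ := by
        rw [Real.mul_rpow (by norm_num) (by positivity),
          ← Real.rpow_mul (by linarith : (0:ℝ) ≤ t),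
          show p * -(1/p) = -1 by field_simp, Real.rpow_neg_one]
      linarith [h1, h2.symm.le]
    have hint1 : (2:ℝ)^(-(1/p)) * Real.log M ≤ ∫ t in (1:ℝ)..M, (1 + t ^ p) ^ (-(1/p)) := by
      have := intervalIntegral.integral_mono_on hM1
        (by
          apply ContinuousOn.intervalIntegrable
          apply ContinuousOn.mul continuousOn_const
          apply ContinuousOn.inv₀ continuousOn_id
          intro t ht
          rw [Set.uIcc_of_le hM1] at ht
          simp only [id]
          linarith [ht.1])
        (aux_intble hp zero_le_one (by linarith)) key
      calc (2:ℝ)^(-(1/p)) * Real.log M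
          = ∫ t in (1:ℝ)..M, (2:ℝ)^(-(1/p)) * t⁻¹ := by
            rw [intervalIntegral.integral_const_mul]
            congr 1
            rw [integral_inv (by
              rw [Set.uIcc_of_le hM1]; intro h; linarith [h.1])]
            simp
        _ ≤ _ := this
    have hlog : (2:ℝ)^(1/p) * x ≤ Real.log M := by
      have : Real.log (Real.exp ((2:ℝ) ^ (1/p) * x)) ≤ Real.log M :=
        Real.log_le_log (Real.exp_pos _) (le_max_right _ _)
      rwa [Real.log_exp] at this
    have h2pos : (0:ℝ) < (2:ℝ)^(-(1/p)) := Real.rpow_pos_of_pos (by norm_num) _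
    have hxle : x ≤ (2:ℝ)^(-(1/p)) * Real.log M := by
      have h1 : (2:ℝ)^(-(1/p)) * ((2:ℝ)^(1/p) * x) ≤ (2:ℝ)^(-(1/p)) * Real.log M :=
        mul_le_mul_of_nonneg_left hlog h2pos.le
      have h2 : (2:ℝ)^(-(1/p)) * (2:ℝ)^(1/p) = 1 := by
        rw [← Real.rpow_add (by norm_num)]; simp
      calc x = (2:ℝ)^(-(1/p)) * (2:ℝ)^(1/p) * x := by rw [h2, one_mul]
        _ = (2:ℝ)^(-(1/p)) * ((2:ℝ)^(1/p) * x) := by ring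
        _ ≤ _ := h1
    have hsplit : arsinhp p M = (∫ t in (0:ℝ)..1, (1 + t ^ p) ^ (-(1/p)))
        + ∫ t in (1:ℝ)..M, (1 + t ^ p) ^ (-(1/p)) := by
      rw [arsinhp, ← intervalIntegral.integral_add_adjacent_intervals
        (aux_intble hp le_rfl zero_le_one) (aux_intble hp zero_le_one (by linarith))]
    have hfirst : 0 ≤ ∫ t in (0:ℝ)..1, (1 + t ^ p) ^ (-(1/p)) := by
      apply intervalIntegral.integral_nonneg zero_le_one
      intro t ht
      apply Real.rpow_nonneg
      have := Real.rpow_nonneg ht.1 p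
      linarith
    linarith
  -- IVT
  obtain ⟨s, hsmem, hseq⟩ : ∃ s ∈ Set.Icc (0:ℝ) M, arsinhp p s = x := by
    have hcont : ContinuousOn (arsinhp p) (Set.Icc 0 M) := by
      have hIcc : Set.uIcc (0:ℝ) M = Set.Icc 0 M := Set.uIcc_of_le (by linarith)
      have hint : MeasureTheory.IntegrableOn
          (fun t : ℝ => (1 + t ^ p) ^ (-(1/p))) (Set.uIcc (0:ℝ) M) MeasureTheory.volume := by
        rw [hIcc]
        exact ((aux_cont hp).mono (fun t ht => ht.1)).integrableOn_Icc
      have := intervalIntegral.continuousOn_primitive_interval hint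
      rw [hIcc] at this
      exact this
    have h0 : arsinhp p 0 = 0 := by simp [arsinhp]
    have hmem : x ∈ Set.Icc (arsinhp p 0) (arsinhp p M) :=
      ⟨by rw [h0]; exact hx.le, hMx⟩
    obtain ⟨s, hs, hseq⟩ := intermediate_value_Icc (by linarith : (0:ℝ) ≤ M) hcont hmem
    exact ⟨s, hs, hseq⟩
  have hexists : ∃ s ∈ Set.Ici (0:ℝ), arsinhp p s = x := ⟨s, hsmem.1, hseq⟩
  have hinv : arsinhp p (sinhp p x) = x := Function.invFunOn_eq hexists
  have hmem0 : sinhp p x ∈ Set.Ici (0:ℝ) := Function.invFunOn_mem hexists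
  set S := sinhp p x with hS
  have hS0 : 0 ≤ S := hmem0
  -- S > 0
  have hSpos : 0 < S := by
    rcases hS0.lt_or_eq with h | h
    · exact h
    · exfalso
      have : arsinhp p 0 = 0 := by simp [arsinhp]
      rw [← h, this] at hinv
      linarith
  -- x ≤ S
  have hxS : x ≤ S := by
    have hle : (∫ t in (0:ℝ)..S, (1 + t ^ p) ^ (-(1/p))) ≤ ∫ t in (0:ℝ)..S, (1:ℝ) := by
      apply intervalIntegral.integral_mono_on hS0 (aux_intble hp le_rfl hS0)
        intervalIntegrable_const
      intro t ht
      apply Real.rpow_le_one_of_one_le_of_nonpos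
      · have := Real.rpow_nonneg ht.1 p; linarith
      · exact neg_nonpos.mpr (by positivity)
    have : arsinhp p S ≤ S := by
      rw [arsinhp]
      simpa using hle
    linarith [hinv]
  -- coshp > 1
  have hSp : 0 < S ^ p := Real.rpow_pos_of_pos hSpos p
  have hc1 : 1 < coshp p x := by
    rw [coshp, ← hS]
    exact (Real.one_lt_rpow_iff_of_pos (by linarith)).mpr (Or.inl ⟨by linarith, by positivity⟩)
  have hcpos : 0 < coshp p x := by linarith
  have hcp1 : 1 < coshp p x ^ (p - 1) :=
    Real.one_lt_rpow_iff_of_pos hcpos |>.mpr (Or.inl ⟨hc1, by linarith⟩)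
  have hmain : S * coshp p x ^ (p - 1) > x :=
    calc x ≤ S := hxS
      _ = S * 1 := by ring
      _ < S * coshp p x ^ (p - 1) := by
          apply mul_lt_mul_of_pos_left hcp1 hSpos
  refine ⟨?_, hmain⟩
  -- tanhp inequality
  rw [tanhp, ← hS]
  rw [gt_iff_lt, div_lt_div_iff₀ (Real.rpow_pos_of_pos hcpos p) hcpos]
  have hrw : coshp p x ^ p = coshp p x ^ (p - 1) * coshp p x := by
    rw [← Real.rpow_add_one (ne_of_gt hcpos) (p-1)]
    ring_nf
  calc x * coshp p x < (S * coshp p x ^ (p-1)) * coshp p x :=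
        mul_lt_mul_of_pos_right hmain hcpos
    _ = S * coshp p x ^ p := by rw [hrw]; ring
end

section
/- For every p > 1 and every x ∈ (0, π_p/2), one has sin_p(x) − x · cos_p(x) > 0; equivalently, tan_p(x) > x. -/
open Real Set Filter Topology MeasureTheory intervalIntegral

section
variable {p : ℝ} (hp : 1 < p)
include hp

lemma fpos {t : ℝ} (h0 : 0 ≤ t) (h1 : t < 1) : 0 < (1 - t ^ p) ^ (-(1/p)) := by
  apply Real.rpow_pos_of_pos
  have : t ^ p < 1 ^ p := Real.rpow_lt_rpow h0 h1 (by linarith)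
  rw [Real.one_rpow] at this
  linarith

lemma fint : IntervalIntegrable (fun t => (1 - t ^ p) ^ (-(1/p))) volume 0 1 := by
  have hg : IntervalIntegrable (fun t : ℝ => (1 - t) ^ (-(1/p))) volume 0 1 := by
    have := (intervalIntegrable_rpow' (a := 0) (b := 1)
      (r := -(1/p)) (by
        have : 1/p < 1 := by
          rw [div_lt_one (by linarith)]; linarith
        linarith)).comp_sub_left 1
    simpa using this.symm
  apply hg.mono_fun
  · apply Measurable.aestronglyMeasurable
    fun_prop
  · rw [EventuallyLE, ae_restrict_iff' measurableSet_uIoc]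
    filter_upwards with t ht
    rw [Set.uIoc_of_le (by norm_num : (0:ℝ) ≤ 1)] at ht
    obtain ⟨ht0, ht1⟩ := ht
    have htp : t ^ p ≤ t := by
      calc t ^ p ≤ t ^ (1:ℝ) := Real.rpow_le_rpow_of_exponent_ge ht0 ht1 (by linarith)
      _ = t := Real.rpow_one t
    have h1 : (0:ℝ) ≤ 1 - t ^ p := by
      have : t ≤ 1 := ht1
      linarith
    rw [Real.norm_of_nonneg (Real.rpow_nonneg h1 _),
        Real.norm_of_nonneg (Real.rpow_nonneg (by linarith) _)]
    rcases eq_or_lt_of_le (by linarith : (0:ℝ) ≤ 1 - t) with h | h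
    · have ht1' : t = 1 := by linarith
      have : t ^ p = 1 := by rw [ht1', Real.one_rpow]
      rw [← h, this]; norm_num
    · rw [Real.rpow_neg h1, Real.rpow_neg (show (0:ℝ) ≤ 1 - t by linarith)]
      apply inv_anti₀ (Real.rpow_pos_of_pos h _)
      exact Real.rpow_le_rpow h.le (by linarith) (by positivity)

lemma fint' {a b : ℝ} (ha : a ∈ Icc (0:ℝ) 1) (hb : b ∈ Icc (0:ℝ) 1) :
    IntervalIntegrable (fun t => (1 - t ^ p) ^ (-(1/p))) volume a b := by
  apply (fint hp).mono_set
  rw [Set.uIcc_of_le (by norm_num : (0:ℝ) ≤ 1)]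
  exact Set.uIcc_subset_Icc ha hb

lemma arcsinp_sub {a b : ℝ} (ha : a ∈ Icc (0:ℝ) 1) (hb : b ∈ Icc (0:ℝ) 1) :
    arcsinp p b - arcsinp p a = ∫ t in a..b, (1 - t ^ p) ^ (-(1/p)) := by
  rw [arcsinp, arcsinp]
  exact integral_interval_sub_left (fint' hp (Set.left_mem_Icc.2 one_pos.le) hb)
    (fint' hp (Set.left_mem_Icc.2 one_pos.le) ha)

lemma arcsinp_strictMonoOn : StrictMonoOn (arcsinp p) (Icc 0 1) := by
  intro a ha b hb hab
  have key : 0 < ∫ t in a..b, (1 - t ^ p) ^ (-(1/p)) := by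
    apply intervalIntegral_pos_of_pos_on (fint' hp ha hb) _ hab
    intro t ht
    exact fpos hp (le_trans ha.1 ht.1.le) (lt_of_lt_of_le ht.2 hb.2)
  have := arcsinp_sub hp ha hb
  linarith

lemma arcsinp_contOn : ContinuousOn (arcsinp p) (Icc 0 1) := by
  have h := continuousOn_primitive_interval (a := 0) (b := 1) (μ := volume)
    (f := fun t => (1 - t ^ p) ^ (-(1/p))) ?_
  · rwa [Set.uIcc_of_le (by norm_num : (0:ℝ) ≤ 1)] at h
  · rw [Set.uIcc_of_le (by norm_num : (0:ℝ) ≤ 1)]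
    exact (intervalIntegrable_iff_integrableOn_Icc_of_le (by norm_num)).mp (fint hp)

end

theorem stmt_16 (p : ℝ) (hp : 1 < p) (x : ℝ) (hx : x ∈ Set.Ioo 0 (pipHalf p)) :
    sinp p x - x * cosp p x > 0 ∧ tanp p x > x := by
  obtain ⟨hx0, hx1⟩ := hx
  have h0 : arcsinp p 0 = 0 := integral_same
  have hmem : x ∈ Icc (arcsinp p 0) (arcsinp p 1) := by
    rw [h0]
    exact ⟨hx0.le, hx1.le⟩
  have hex : ∃ a ∈ Icc (0:ℝ) 1, arcsinp p a = x := by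
    obtain ⟨a, ha, hax⟩ := intermediate_value_Icc (by norm_num : (0:ℝ) ≤ 1)
      (arcsinp_contOn hp) hmem
    exact ⟨a, ha, hax⟩
  set s := sinp p x with hs_def
  have hsmem : s ∈ Icc (0:ℝ) 1 := Function.invFunOn_mem hex
  have hsx : arcsinp p s = x := Function.invFunOn_eq hex
  have hs0 : 0 < s := by
    rcases lt_or_ge 0 s with h | h
    · exact h
    · have hse : s = 0 := le_antisymm h hsmem.1
      rw [hse, h0] at hsx
      linarith
  have hs1 : s < 1 := by
    rcases lt_or_ge s 1 with h | h
    · exact h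
    · have hse : s = 1 := le_antisymm hsmem.2 h
      rw [hse] at hsx
      rw [pipHalf] at hx1
      linarith
  have hsp : s ^ p < 1 := by
    have := Real.rpow_lt_rpow hs0.le hs1 (by linarith : (0:ℝ) < p)
    rwa [Real.one_rpow] at this
  have hbase : 0 < 1 - s ^ p := by linarith
  set c := (1 - s ^ p) ^ (-(1/p)) with hc
  have hint : IntervalIntegrable (fun t => (1 - t ^ p) ^ (-(1/p))) volume 0 s :=
    fint' hp (Set.left_mem_Icc.2 one_pos.le) hsmem
  have hkey : 0 < ∫ t in (0:ℝ)..s, (c - (1 - t ^ p) ^ (-(1/p))) := by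
    apply intervalIntegral_pos_of_pos_on (intervalIntegrable_const.sub hint) _ hs0
    intro t ht
    have htp : t ^ p < s ^ p := Real.rpow_lt_rpow ht.1.le ht.2 (by linarith)
    have hb2 : 0 < 1 - t ^ p := by linarith
    have hlt : (1 - t ^ p) ^ (-(1/p)) < c := by
      rw [hc, Real.rpow_neg hb2.le, Real.rpow_neg hbase.le]
      apply inv_strictAnti₀ (Real.rpow_pos_of_pos hbase _)
      exact Real.rpow_lt_rpow hbase.le (by linarith) (by positivity)
    linarith
  have heval : (∫ t in (0:ℝ)..s, (c - (1 - t ^ p) ^ (-(1/p)))) = s * c - x := by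
    rw [integral_sub intervalIntegrable_const hint, intervalIntegral.integral_const, ← hsx, arcsinp]
    simp [smul_eq_mul]
  have hxs : x < s * c := by
    rw [heval] at hkey; linarith
  have hcospx : cosp p x = (1 - s ^ p) ^ (1/p : ℝ) := rfl
  have hd : 0 < (1 - s ^ p) ^ (1/p : ℝ) := Real.rpow_pos_of_pos hbase _
  have hcd : c * (1 - s ^ p) ^ (1/p : ℝ) = 1 := by
    rw [hc, ← Real.rpow_add hbase]
    norm_num
  have hmain : x * cosp p x < s := by
    rw [hcospx]
    calc x * (1 - s ^ p) ^ (1/p : ℝ) < s * c * (1 - s ^ p) ^ (1/p : ℝ) := by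
          exact mul_lt_mul_of_pos_right hxs hd
      _ = s * (c * (1 - s ^ p) ^ (1/p : ℝ)) := by ring
      _ = s := by rw [hcd, mul_one]
  constructor
  · linarith
  · rw [tanp, hcospx]
    rw [gt_iff_lt, lt_div_iff₀ hd]
    rw [hcospx] at hmain
    linarith
end
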